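/- Fix m, δ, I > 0. Let v = (v_x, v_y, v_φ) : ℝ → ℝ³ and n = (N₁, N₂, M) : ℝ → ℝ³ be differentiable curves satisfying the reduced planar ball bearing equations 𝕀(n(t)) v̇(t) = 𝐦(v(t), n(t)) and ṅ(t) = 𝕁(n(t)) v(t) for all t. Then the functions f₁ = (m + δ) v_x − v_φ N₂ and f₂ = (m + δ) v_y + v_φ N₁ are constant in t. -/

import Mathlib

open Matrix

/-- The matrix `𝕀(n)` of the reduced planar ball bearing problem, for
`n = (N₁, N₂, M)`. -/
noncomputable def planarInertia (m δ I : ℝ) (n : Fin 3 → ℝ) : Matrix (Fin 3) (Fin 3) ℝ :=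
  !![m + δ, 0, -n 1; 0, m + δ, n 0; -n 1, n 0, I + n 2]

/-- The matrix `𝕁(n)` of the reduced planar ball bearing problem. -/
noncomputable def planarJ (δ : ℝ) (n : Fin 3 → ℝ) : Matrix (Fin 3) (Fin 3) ℝ :=
  (-(1 / 2 : ℝ)) • !![δ, 0, n 1; 0, δ, -n 0; 2 * n 0, 2 * n 1, 0]

/-- The right-hand side `𝐦(v, n)` of the reduced planar ball bearing problem, for
`v = (v_x, v_y, v_φ)` and `n = (N₁, N₂, M)`. -/
noncomputable def planarRHS (δ : ℝ) (v n : Fin 3 → ℝ) : Fin 3 → ℝ :=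
  (1 / 2 : ℝ) • ![n 0 * v 2 ^ 2 - δ * v 2 * v 1,
    n 1 * v 2 ^ 2 + δ * v 2 * v 0,
    v 2 * (n 0 * v 0 + n 1 * v 1)]

/-! Both integrals are rows of `𝕀(n) v`. Differentiating `(𝕀(n) v)ᵢ` for `i = x, y` gives
`(𝕀(n) v̇)ᵢ` plus a term `± v_φ Ṅ`, and the equations of motion make these cancel because the
first two components of `𝐦(v, n)` are exactly `± v_φ (𝕁(n) v)`. -/

section Components

variable (m δ I : ℝ) (v w n : Fin 3 → ℝ)

lemma planarInertia_mulVec_zero : (planarInertia m δ I n *ᵥ w) 0 = (m + δ) * w 0 - w 2 * n 1 := by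
  simp only [planarInertia, mulVec, dotProduct, Fin.sum_univ_three, of_apply, cons_val',
    cons_val_fin_one, cons_val_zero, cons_val_one, cons_val]
  ring

lemma planarInertia_mulVec_one : (planarInertia m δ I n *ᵥ w) 1 = (m + δ) * w 1 + w 2 * n 0 := by
  simp only [planarInertia, mulVec, dotProduct, Fin.sum_univ_three, of_apply, cons_val',
    cons_val_fin_one, cons_val_zero, cons_val_one, cons_val]
  ring

lemma planarRHS_zero_eq : planarRHS δ v n 0 = v 2 * (planarJ δ n *ᵥ v) 1 := by
  simp only [planarRHS, planarJ, mulVec, dotProduct, Fin.sum_univ_three, Pi.smul_apply,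
    Matrix.smul_apply, smul_eq_mul, of_apply, cons_val', cons_val_fin_one, cons_val_zero,
    cons_val_one, cons_val]
  ring

lemma planarRHS_one_eq : planarRHS δ v n 1 = -(v 2 * (planarJ δ n *ᵥ v) 0) := by
  simp only [planarRHS, planarJ, mulVec, dotProduct, Fin.sum_univ_three, Pi.smul_apply,
    Matrix.smul_apply, smul_eq_mul, of_apply, cons_val', cons_val_fin_one, cons_val_zero,
    cons_val_one, cons_val]
  ring

end Components

section Solution

variable {m δ I : ℝ} {v n : ℝ → Fin 3 → ℝ} {w : Fin 3 → ℝ} {t : ℝ}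

lemma hasDerivAt_linearIntegral_x_eq_zero (hv : HasDerivAt v w t)
    (heq : planarInertia m δ I (n t) *ᵥ w = planarRHS δ (v t) (n t))
    (hn : HasDerivAt n (planarJ δ (n t) *ᵥ v t) t) :
    HasDerivAt (fun s => (m + δ) * v s 0 - v s 2 * n s 1) 0 t := by
  have hvi (i : Fin 3) := hasDerivAt_pi.mp hv i
  have hni (i : Fin 3) := hasDerivAt_pi.mp hn i
  refine (((hvi 0).const_mul (m + δ)).sub ((hvi 2).mul (hni 1))).congr_deriv ?_
  have hrow := congrFun heq 0
  rw [planarInertia_mulVec_zero, planarRHS_zero_eq] at hrow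
  linear_combination hrow

lemma hasDerivAt_linearIntegral_y_eq_zero (hv : HasDerivAt v w t)
    (heq : planarInertia m δ I (n t) *ᵥ w = planarRHS δ (v t) (n t))
    (hn : HasDerivAt n (planarJ δ (n t) *ᵥ v t) t) :
    HasDerivAt (fun s => (m + δ) * v s 1 + v s 2 * n s 0) 0 t := by
  have hvi (i : Fin 3) := hasDerivAt_pi.mp hv i
  have hni (i : Fin 3) := hasDerivAt_pi.mp hn i
  refine (((hvi 1).const_mul (m + δ)).add ((hvi 2).mul (hni 0))).congr_deriv ?_
  have hrow := congrFun heq 1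
  rw [planarInertia_mulVec_one, planarRHS_one_eq] at hrow
  linear_combination hrow

end Solution

theorem planar_ball_bearing_linear_integrals
    (m δ I : ℝ)
    (v v' n : ℝ → Fin 3 → ℝ)
    (hv : ∀ t : ℝ, HasDerivAt v (v' t) t)
    (heq : ∀ t : ℝ, (planarInertia m δ I (n t)).mulVec (v' t) = planarRHS δ (v t) (n t))
    (hn : ∀ t : ℝ, HasDerivAt n ((planarJ δ (n t)).mulVec (v t)) t) :
    (∀ s t : ℝ, (m + δ) * v s 0 - v s 2 * n s 1 = (m + δ) * v t 0 - v t 2 * n t 1) ∧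
    (∀ s t : ℝ, (m + δ) * v s 1 + v s 2 * n s 0 = (m + δ) * v t 1 + v t 2 * n t 0) := by
  have hconst {f : ℝ → ℝ} (hf : ∀ t, HasDerivAt f 0 t) : ∀ s t, f s = f t :=
    is_const_of_deriv_eq_zero (fun t => (hf t).differentiableAt) (fun t => (hf t).deriv)
  exact ⟨hconst fun t => hasDerivAt_linearIntegral_x_eq_zero (hv t) (heq t) (hn t),
    hconst fun t => hasDerivAt_linearIntegral_y_eq_zero (hv t) (heq t) (hn t)⟩
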